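/- arXiv:2104.00910 — 2 statements merged into one kernel-verified Lean document; each statement's English description precedes it below -/
import Mathlib

section
/- Let μ₀, μ₁ be Borel probability measures on ℝ^m with finite second moments, and let γ be an optimal coupling of μ₀ and μ₁, i.e. a coupling with ∫ |x − y|² dγ(x,y) = W₂²(μ₀, μ₁). For t ∈ [0,1] define c_t = (u_t)_# γ where u_t(x,y) = (1−t)x + ty. Then the curve t ↦ c_t is a geodesic of constant speed: W₂(c_s, c_t) = |t − s|·W₂(μ₀, μ₁) for all s, t ∈ [0,1]. -/
open MeasureTheory

/-- The squared Wasserstein distance of order 2: the infimum of `∫ d(x,y)² dπ` over all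
couplings `π` of `μ` and `ν`. -/
noncomputable def W2sq {X : Type*} [MeasurableSpace X] [PseudoMetricSpace X]
    (μ ν : Measure X) : ℝ :=
  sInf {r : ℝ | ∃ π : Measure (X × X), π.map Prod.fst = μ ∧ π.map Prod.snd = ν ∧
    r = ∫ p, dist p.1 p.2 ^ 2 ∂π}

/-- The Wasserstein distance of order 2. -/
noncomputable def W2 {X : Type*} [MeasurableSpace X] [PseudoMetricSpace X]
    (μ ν : Measure X) : ℝ :=
  Real.sqrt (W2sq μ ν)

/-! Pushing the optimal coupling `γ` forward by `p ↦ (u_s p, u_t p)` gives a coupling of `c_s`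
and `c_t` whose cost is `(t - s)²` times that of `γ`, so `W₂(c_s, c_t) ≤ |t - s| W₂(μ₀, μ₁)`.
For `s ≤ t`, the triangle inequality along `μ₀ = c_0, c_s, c_t, c_1 = μ₁` together with these
upper bounds on the two outer pieces forces equality. The triangle inequality for `W₂` comes from
gluing two nearly optimal couplings along their common marginal (by disintegration) and
Minkowski's inequality in `L²`; finite second moments are what make every cost integrable
(otherwise the Bochner integral would read `0`). -/

open Set ProbabilityTheory

section Coupling

variable {X : Type*} [MeasurableSpace X] [PseudoMetricSpace X]

lemma W2sq_le_integral {μ ν : Measure X} {π : Measure (X × X)}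
    (h₁ : π.map Prod.fst = μ) (h₂ : π.map Prod.snd = ν) :
    W2sq μ ν ≤ ∫ p, dist p.1 p.2 ^ 2 ∂π := by
  refine csInf_le ⟨0, ?_⟩ ⟨π, h₁, h₂, rfl⟩
  rintro _ ⟨π', -, -, rfl⟩
  exact integral_nonneg fun _ => sq_nonneg _

lemma W2_le_sqrt_integral {μ ν : Measure X} {π : Measure (X × X)}
    (h₁ : π.map Prod.fst = μ) (h₂ : π.map Prod.snd = ν) :
    W2 μ ν ≤ √(∫ p, dist p.1 p.2 ^ 2 ∂π) :=
  Real.sqrt_le_sqrt (W2sq_le_integral h₁ h₂)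

lemma exists_coupling_sqrt_integral_lt {μ ν : Measure X}
    [IsProbabilityMeasure μ] [IsProbabilityMeasure ν] {a : ℝ} (ha : W2 μ ν < a) :
    ∃ π : Measure (X × X), π.map Prod.fst = μ ∧ π.map Prod.snd = ν ∧
      √(∫ p, dist p.1 p.2 ^ 2 ∂π) < a := by
  have ha₀ : 0 < a := (Real.sqrt_nonneg _).trans_lt ha
  have hne : {r : ℝ | ∃ π : Measure (X × X), π.map Prod.fst = μ ∧ π.map Prod.snd = ν ∧
      r = ∫ p, dist p.1 p.2 ^ 2 ∂π}.Nonempty :=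
    ⟨_, μ.prod ν, by simp, by simp, rfl⟩
  obtain ⟨_, ⟨π, h₁, h₂, rfl⟩, hπ⟩ := exists_lt_of_csInf_lt hne ((Real.sqrt_lt' ha₀).1 ha)
  exact ⟨π, h₁, h₂, (Real.sqrt_lt' ha₀).2 hπ⟩

lemma W2_comm (μ ν : Measure X) : W2 μ ν = W2 ν μ := by
  suffices h : ∀ μ ν : Measure X,
      {r : ℝ | ∃ π : Measure (X × X), π.map Prod.fst = μ ∧ π.map Prod.snd = ν ∧
        r = ∫ p, dist p.1 p.2 ^ 2 ∂π} ⊆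
      {r : ℝ | ∃ π : Measure (X × X), π.map Prod.fst = ν ∧ π.map Prod.snd = μ ∧
        r = ∫ p, dist p.1 p.2 ^ 2 ∂π} by
    rw [W2, W2, W2sq, W2sq, (h μ ν).antisymm (h ν μ)]
  rintro μ ν _ ⟨π, h₁, h₂, rfl⟩
  refine ⟨π.map Prod.swap, ?_, ?_, ?_⟩
  · rwa [Measure.map_map measurable_fst measurable_swap]
  · rwa [Measure.map_map measurable_snd measurable_swap]
  · rw [show (Prod.swap : X × X → X × X) = MeasurableEquiv.prodComm from rfl,
      integral_map_equiv]
    congr 1 with p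
    rw [dist_comm]
    rfl

variable [SecondCountableTopology X] [OpensMeasurableSpace X]

lemma integral_dist_sq_map {α : Type*} [MeasurableSpace α] {ρ : Measure α} {q : α → X × X}
    (hq : Measurable q) :
    ∫ p, dist p.1 p.2 ^ 2 ∂(ρ.map q) = ∫ a, dist (q a).1 (q a).2 ^ 2 ∂ρ :=
  integral_map hq.aemeasurable (by fun_prop)

end Coupling

theorem MeasureTheory.Measure.exists_map_fst_eq_and_map_eq {X Y Z : Type*}
    [MeasurableSpace X] [MeasurableSpace Y] [MeasurableSpace Z] [StandardBorelSpace Z]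
    [Nonempty Z] (π₁ : Measure (X × Y)) (π₂ : Measure (Y × Z)) [SFinite π₁]
    [IsFiniteMeasure π₂] (h : π₁.map Prod.snd = π₂.map Prod.fst) :
    ∃ ρ : Measure ((X × Y) × Z), ρ.map Prod.fst = π₁ ∧ ρ.map (fun p => (p.1.2, p.2)) = π₂ := by
  refine ⟨π₁ ⊗ₘ π₂.condKernel.comap Prod.snd measurable_snd, Measure.fst_compProd _ _, ?_⟩
  have hg : Measurable fun p : (X × Y) × Z => (p.1.2, p.2) := by fun_prop
  ext s hs
  rw [Measure.map_apply hg hs, Measure.compProd_apply (hg hs)]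
  conv_rhs => rw [← π₂.disintegrate π₂.condKernel, Measure.compProd_apply hs]
  rw [Measure.fst, ← h,
    lintegral_map (π₂.condKernel.measurable_kernel_prodMk_left hs) measurable_snd]
  rfl

section Minkowski

variable {α : Type*} [MeasurableSpace α] {ρ : Measure α}

lemma MeasureTheory.MemLp.sqrt_integral_sq {u : α → ℝ} (hu : MemLp u 2 ρ) :
    √(∫ a, u a ^ 2 ∂ρ) = (eLpNorm u 2 ρ).toReal := by
  rw [hu.eLpNorm_eq_integral_rpow_norm two_ne_zero ENNReal.ofNat_ne_top,
    ENNReal.toReal_ofReal (by positivity), Real.sqrt_eq_rpow]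
  norm_num

lemma sqrt_integral_dist_sq_le {X : Type*} [PseudoMetricSpace X] {f g h : α → X}
    (hfg : MemLp (fun a => dist (f a) (g a)) 2 ρ) (hgh : MemLp (fun a => dist (g a) (h a)) 2 ρ)
    (hfh : AEStronglyMeasurable (fun a => dist (f a) (h a)) ρ) :
    √(∫ a, dist (f a) (h a) ^ 2 ∂ρ) ≤
      √(∫ a, dist (f a) (g a) ^ 2 ∂ρ) + √(∫ a, dist (g a) (h a) ^ 2 ∂ρ) := by
  have hle : ∀ a, ‖dist (f a) (h a)‖ ≤ dist (f a) (g a) + dist (g a) (h a) := fun a => by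
    rw [Real.norm_of_nonneg dist_nonneg]
    exact dist_triangle _ _ _
  have hfh' : MemLp (fun a => dist (f a) (h a)) 2 ρ :=
    (hfg.add hgh).of_le hfh (.of_forall fun a => (hle a).trans (le_abs_self _))
  rw [hfg.sqrt_integral_sq, hgh.sqrt_integral_sq, hfh'.sqrt_integral_sq,
    ← ENNReal.toReal_add hfg.eLpNorm_ne_top hgh.eLpNorm_ne_top]
  exact ENNReal.toReal_mono (by finiteness)
    ((eLpNorm_mono_real hle).trans (eLpNorm_add_le hfg.1 hgh.1 one_le_two))

end Minkowski

section Triangle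

variable {E : Type*} [NormedAddCommGroup E] [MeasurableSpace E]

lemma memLp_comp_of_map_eq {α : Type*} [MeasurableSpace α] {ρ : Measure α} {μ : Measure E}
    {f : α → E} (hf : Measurable f) (hρ : ρ.map f = μ) (hμ : MemLp (fun x : E => x) 2 μ) :
    MemLp f 2 ρ := by
  subst hρ
  exact (memLp_map_measure_iff hμ.1 hf.aemeasurable).1 hμ

lemma memLp_dist_of_coupling {μ ν : Measure E} (hμ : MemLp (fun x : E => x) 2 μ)
    (hν : MemLp (fun x : E => x) 2 ν) {π : Measure (E × E)}
    (h₁ : π.map Prod.fst = μ) (h₂ : π.map Prod.snd = ν) :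
    MemLp (fun p : E × E => dist p.1 p.2) 2 π := by
  simpa only [dist_eq_norm, Pi.sub_apply] using ((memLp_comp_of_map_eq measurable_fst h₁ hμ).sub
    (memLp_comp_of_map_eq measurable_snd h₂ hν)).norm

variable [BorelSpace E] [SecondCountableTopology E] [CompleteSpace E]

lemma exists_coupling_sqrt_integral_le_add {ν₁ ν₂ ν₃ : Measure E}
    (h₁ : MemLp (fun x : E => x) 2 ν₁) (h₂ : MemLp (fun x : E => x) 2 ν₂)
    (h₃ : MemLp (fun x : E => x) 2 ν₃) {π₁ π₂ : Measure (E × E)}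
    [SFinite π₁] [IsFiniteMeasure π₂]
    (hπ₁₁ : π₁.map Prod.fst = ν₁) (hπ₁₂ : π₁.map Prod.snd = ν₂)
    (hπ₂₁ : π₂.map Prod.fst = ν₂) (hπ₂₂ : π₂.map Prod.snd = ν₃) :
    ∃ π : Measure (E × E), π.map Prod.fst = ν₁ ∧ π.map Prod.snd = ν₃ ∧
      √(∫ p, dist p.1 p.2 ^ 2 ∂π) ≤
        √(∫ p, dist p.1 p.2 ^ 2 ∂π₁) + √(∫ p, dist p.1 p.2 ^ 2 ∂π₂) := by
  obtain ⟨ρ, hρ₁, hρ₂⟩ :=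
    Measure.exists_map_fst_eq_and_map_eq π₁ π₂ (hπ₁₂.trans hπ₂₁.symm)
  have hq : Measurable fun p : (E × E) × E => (p.1.1, p.2) := by fun_prop
  have hq₂ : Measurable fun p : (E × E) × E => (p.1.2, p.2) := by fun_prop
  refine ⟨ρ.map fun p => (p.1.1, p.2), ?_, ?_, ?_⟩
  · rw [Measure.map_map measurable_fst hq, ← hπ₁₁, ← hρ₁,
      Measure.map_map measurable_fst measurable_fst]
    rfl
  · rw [Measure.map_map measurable_snd hq, ← hπ₂₂, ← hρ₂, Measure.map_map measurable_snd hq₂]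
    rfl
  have hd₁ := memLp_dist_of_coupling h₁ h₂ hπ₁₁ hπ₁₂
  have hd₂ := memLp_dist_of_coupling h₂ h₃ hπ₂₁ hπ₂₂
  rw [← hρ₁] at hd₁ ⊢
  rw [← hρ₂] at hd₂ ⊢
  rw [integral_dist_sq_map hq, integral_dist_sq_map measurable_fst, integral_dist_sq_map hq₂]
  exact sqrt_integral_dist_sq_le
    ((memLp_map_measure_iff (by fun_prop) measurable_fst.aemeasurable).1 hd₁)
    ((memLp_map_measure_iff (by fun_prop) hq₂.aemeasurable).1 hd₂) (by fun_prop)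

lemma isProbabilityMeasure_of_map_eq {α β : Type*} [MeasurableSpace α] [MeasurableSpace β]
    {π : Measure α} {μ : Measure β} [IsProbabilityMeasure μ] {f : α → β} (h : π.map f = μ) :
    IsProbabilityMeasure π := by
  subst h
  exact Measure.isProbabilityMeasure_of_map f

theorem W2_triangle {ν₁ ν₂ ν₃ : Measure E}
    [IsProbabilityMeasure ν₁] [IsProbabilityMeasure ν₂] [IsProbabilityMeasure ν₃]
    (h₁ : MemLp (fun x : E => x) 2 ν₁) (h₂ : MemLp (fun x : E => x) 2 ν₂)
    (h₃ : MemLp (fun x : E => x) 2 ν₃) :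
    W2 ν₁ ν₃ ≤ W2 ν₁ ν₂ + W2 ν₂ ν₃ := by
  refine le_of_forall_pos_lt_add fun ε hε => ?_
  obtain ⟨π₁, hπ₁₁, hπ₁₂, hπ₁⟩ :=
    exists_coupling_sqrt_integral_lt (lt_add_of_pos_right (W2 ν₁ ν₂) (half_pos hε))
  obtain ⟨π₂, hπ₂₁, hπ₂₂, hπ₂⟩ :=
    exists_coupling_sqrt_integral_lt (lt_add_of_pos_right (W2 ν₂ ν₃) (half_pos hε))
  have := isProbabilityMeasure_of_map_eq hπ₁₁
  have := isProbabilityMeasure_of_map_eq hπ₂₁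
  obtain ⟨π, hπ₁, hπ₃, hπ⟩ :=
    exists_coupling_sqrt_integral_le_add h₁ h₂ h₃ hπ₁₁ hπ₁₂ hπ₂₁ hπ₂₂
  linarith [W2_le_sqrt_integral hπ₁ hπ₃]

end Triangle

section Interpolation

variable {E : Type*} [NormedAddCommGroup E] [NormedSpace ℝ E]

lemma dist_interp_interp (s t : ℝ) (x y : E) :
    dist ((1 - s) • x + s • y) ((1 - t) • x + t • y) = |t - s| * dist x y := by
  rw [dist_eq_norm, dist_eq_norm, ← Real.norm_eq_abs, ← norm_smul]
  congr 1
  module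

variable [MeasurableSpace E] [BorelSpace E] [SecondCountableTopology E]

lemma W2_map_interp_le (γ : Measure (E × E)) (s t : ℝ) :
    W2 (γ.map fun p => (1 - s) • p.1 + s • p.2) (γ.map fun p => (1 - t) • p.1 + t • p.2) ≤
      |t - s| * √(∫ p, dist p.1 p.2 ^ 2 ∂γ) := by
  have hq : Measurable fun p : E × E => ((1 - s) • p.1 + s • p.2, (1 - t) • p.1 + t • p.2) := by
    fun_prop
  calc _ ≤ √(∫ p, dist p.1 p.2 ^ 2 ∂(γ.map fun p => ((1 - s) • p.1 + s • p.2,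
          (1 - t) • p.1 + t • p.2))) :=
        W2_le_sqrt_integral (Measure.map_map measurable_fst hq) (Measure.map_map measurable_snd hq)
    _ = √((t - s) ^ 2 * ∫ p, dist p.1 p.2 ^ 2 ∂γ) := by
        simp only [integral_dist_sq_map hq, dist_interp_interp, mul_pow, sq_abs,
          integral_const_mul]
    _ = |t - s| * √(∫ p, dist p.1 p.2 ^ 2 ∂γ) := by
        rw [Real.sqrt_mul (sq_nonneg _), Real.sqrt_sq_eq_abs]

lemma memLp_map_interp {γ : Measure (E × E)} (h₁ : MemLp (fun p : E × E => p.1) 2 γ)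
    (h₂ : MemLp (fun p : E × E => p.2) 2 γ) (t : ℝ) :
    MemLp (fun x : E => x) 2 (γ.map fun p => (1 - t) • p.1 + t • p.2) :=
  (memLp_map_measure_iff (by fun_prop) (by fun_prop)).2
    ((h₁.const_smul (1 - t)).add (h₂.const_smul t))

end Interpolation

lemma eq_abs_sub_mul_of_le_of_triangle {D : ℝ → ℝ → ℝ} {L : ℝ}
    (hle : ∀ s ∈ Icc (0 : ℝ) 1, ∀ t ∈ Icc (0 : ℝ) 1, D s t ≤ |t - s| * L)
    (htri : ∀ r ∈ Icc (0 : ℝ) 1, ∀ s ∈ Icc (0 : ℝ) 1, ∀ t ∈ Icc (0 : ℝ) 1,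
      D r t ≤ D r s + D s t)
    (hsymm : ∀ s t, D s t = D t s) (h01 : L ≤ D 0 1) :
    ∀ s ∈ Icc (0 : ℝ) 1, ∀ t ∈ Icc (0 : ℝ) 1, D s t = |t - s| * L := by
  have h0 : (0 : ℝ) ∈ Icc (0 : ℝ) 1 := left_mem_Icc.2 zero_le_one
  have h1 : (1 : ℝ) ∈ Icc (0 : ℝ) 1 := right_mem_Icc.2 zero_le_one
  suffices h : ∀ s ∈ Icc (0 : ℝ) 1, ∀ t ∈ Icc (0 : ℝ) 1, s ≤ t → D s t = (t - s) * L by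
    intro s hs t ht
    rcases le_total s t with hst | hts
    · rw [h s hs t ht hst, abs_of_nonneg (sub_nonneg.2 hst)]
    · rw [hsymm, h t ht s hs hts, abs_sub_comm, abs_of_nonneg (sub_nonneg.2 hts)]
  intro s hs t ht hst
  have hs0 := hle 0 h0 s hs
  have ht1 := hle t ht 1 h1
  have hst' := hle s hs t ht
  rw [sub_zero, abs_of_nonneg hs.1] at hs0
  rw [abs_of_nonneg (sub_nonneg.2 ht.2)] at ht1
  rw [abs_of_nonneg (sub_nonneg.2 hst)] at hst'
  linarith [htri 0 h0 t ht 1 h1, htri 0 h0 s hs t ht]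

theorem stmt4_general {m : ℕ}
    (μ₀ μ₁ : Measure (EuclideanSpace ℝ (Fin m)))
    [IsProbabilityMeasure μ₀]
    (hm₀ : MemLp (fun x : EuclideanSpace ℝ (Fin m) => x) 2 μ₀)
    (hm₁ : MemLp (fun x : EuclideanSpace ℝ (Fin m) => x) 2 μ₁)
    (γ : Measure (EuclideanSpace ℝ (Fin m) × EuclideanSpace ℝ (Fin m)))
    (hγ₁ : γ.map Prod.fst = μ₀) (hγ₂ : γ.map Prod.snd = μ₁)
    (hopt : ∫ p, dist p.1 p.2 ^ 2 ∂γ = W2sq μ₀ μ₁)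
    (c : ℝ → Measure (EuclideanSpace ℝ (Fin m)))
    (hc : ∀ t : ℝ, c t = γ.map (fun p => (1 - t) • p.1 + t • p.2)) :
    ∀ s ∈ Set.Icc (0:ℝ) 1, ∀ t ∈ Set.Icc (0:ℝ) 1,
      W2 (c s) (c t) = |t - s| * W2 μ₀ μ₁ := by
  have := isProbabilityMeasure_of_map_eq hγ₁
  have hprob (r : ℝ) : IsProbabilityMeasure (c r) := by
    rw [hc r]
    exact Measure.isProbabilityMeasure_map (by fun_prop)
  have hmom (r : ℝ) : MemLp (fun x => x) 2 (c r) := hc r ▸ memLp_map_interp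
    (memLp_comp_of_map_eq measurable_fst hγ₁ hm₀) (memLp_comp_of_map_eq measurable_snd hγ₂ hm₁) r
  have hc₀ : c 0 = μ₀ := by simpa [hc] using hγ₁
  have hc₁ : c 1 = μ₁ := by simpa [hc] using hγ₂
  have hW : √(∫ p, dist p.1 p.2 ^ 2 ∂γ) = W2 μ₀ μ₁ := by rw [hopt, W2]
  refine eq_abs_sub_mul_of_le_of_triangle (D := fun s t => W2 (c s) (c t))
    (fun s _ t _ => ?_) (fun r _ s _ t _ => W2_triangle (hmom r) (hmom s) (hmom t))
    (fun s t => W2_comm _ _) (by rw [hc₀, hc₁])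
  simpa only [hc, hW] using W2_map_interp_le γ s t

/-- Displacement interpolation in `ℝ^m`: if `γ` is an optimal coupling of `μ₀` and `μ₁`
and `c_t = (u_t)_#γ` with `u_t(x,y) = (1−t)x + ty`, then `t ↦ c_t` is a geodesic of
constant speed: `W₂(c_s, c_t) = |t−s|·W₂(μ₀, μ₁)` for all `s, t ∈ [0,1]`. -/
theorem stmt4 {m : ℕ}
    (μ₀ μ₁ : Measure (EuclideanSpace ℝ (Fin m)))
    [IsProbabilityMeasure μ₀] [IsProbabilityMeasure μ₁]
    (hm₀ : MemLp (fun x : EuclideanSpace ℝ (Fin m) => x) 2 μ₀)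
    (hm₁ : MemLp (fun x : EuclideanSpace ℝ (Fin m) => x) 2 μ₁)
    (γ : Measure (EuclideanSpace ℝ (Fin m) × EuclideanSpace ℝ (Fin m)))
    (hγ₁ : γ.map Prod.fst = μ₀) (hγ₂ : γ.map Prod.snd = μ₁)
    (hopt : ∫ p, dist p.1 p.2 ^ 2 ∂γ = W2sq μ₀ μ₁)
    (c : ℝ → Measure (EuclideanSpace ℝ (Fin m)))
    (hc : ∀ t : ℝ, c t = γ.map (fun p => (1 - t) • p.1 + t • p.2)) :
    ∀ s ∈ Set.Icc (0:ℝ) 1, ∀ t ∈ Set.Icc (0:ℝ) 1,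
      W2 (c s) (c t) = |t - s| * W2 μ₀ μ₁ :=
  stmt4_general μ₀ μ₁ hm₀ hm₁ γ hγ₁ hγ₂ hopt c hc
end

section
/- Let ρ : ℝ^m → (0,∞) be continuously differentiable, μ = ρ·λ with λ Lebesgue measure, and for ψ of class C² set L^μψ = Δψ + ⟨∇(log ρ), ∇ψ⟩. Then for all smooth compactly supported functions ψ₁, ψ₂, ψ₃ : ℝ^m → ℝ, ∫ ⟨ ∇⟨∇ψ₁, ∇ψ₂⟩, ∇ψ₃ ⟩ dμ + ∫ ⟨ (L^μψ₂)·∇ψ₁ − (L^μψ₁)·∇ψ₂, ∇ψ₃ ⟩ dμ = 2 ∫ ∇²ψ₂(∇ψ₁, ∇ψ₃) dμ, where ∇⟨∇ψ₁,∇ψ₂⟩ is the gradient of x ↦ ⟨∇ψ₁(x), ∇ψ₂(x)⟩ and ∇²ψ₂ is the Hessian bilinear form. -/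
open MeasureTheory RealInnerProductSpace

/-- The Laplacian of `ψ` on `ℝ^m`: the trace of the derivative of the gradient. -/
noncomputable def laplacian {m : ℕ} (ψ : EuclideanSpace ℝ (Fin m) → ℝ)
    (x : EuclideanSpace ℝ (Fin m)) : ℝ :=
  LinearMap.trace ℝ (EuclideanSpace ℝ (Fin m)) (fderiv ℝ (gradient ψ) x).toLinearMap

/-- The weighted Laplacian `L^μψ = Δψ + ⟨∇(log ρ), ∇ψ⟩` of the measure `μ = ρ·λ`. -/
noncomputable def Lmu {m : ℕ} (ρ ψ : EuclideanSpace ℝ (Fin m) → ℝ)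
    (x : EuclideanSpace ℝ (Fin m)) : ℝ :=
  laplacian ψ x + ⟪gradient (fun y => Real.log (ρ y)) x, gradient ψ x⟫

/-- The Hessian bilinear form `∇²ψ(u,v) = ⟨(D∇ψ)(x)u, v⟩`. -/
noncomputable def hess {m : ℕ} (ψ : EuclideanSpace ℝ (Fin m) → ℝ)
    (x u v : EuclideanSpace ℝ (Fin m)) : ℝ :=
  ⟪fderiv ℝ (gradient ψ) x u, v⟫

section Helpers

open InnerProductSpace

variable {m : ℕ}

noncomputable def dualIso (m : ℕ) :
    StrongDual ℝ (EuclideanSpace ℝ (Fin m)) →L[ℝ] EuclideanSpace ℝ (Fin m) where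
  toFun L := (toDual ℝ (EuclideanSpace ℝ (Fin m))).symm L
  map_add' x y := map_add _ x y
  map_smul' c y := by
    simpa using map_smulₛₗ (toDual ℝ (EuclideanSpace ℝ (Fin m))).symm c y
  cont := (toDual ℝ (EuclideanSpace ℝ (Fin m))).symm.continuous

lemma gradient_eq_dualIso (f : EuclideanSpace ℝ (Fin m) → ℝ) :
    gradient f = fun x => dualIso m (fderiv ℝ f x) := rfl

lemma inner_gradient (f : EuclideanSpace ℝ (Fin m) → ℝ) (x v : EuclideanSpace ℝ (Fin m)) :
    ⟪gradient f x, v⟫ = fderiv ℝ f x v := toDual_symm_apply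

lemma contDiff_gradient {f : EuclideanSpace ℝ (Fin m) → ℝ} (hf : ContDiff ℝ (⊤ : ℕ∞) f) :
    ContDiff ℝ (⊤ : ℕ∞) (gradient f) := by
  rw [gradient_eq_dualIso]
  exact (dualIso m).contDiff.comp (hf.fderiv_right (by simp))

lemma hcs_gradient {f : EuclideanSpace ℝ (Fin m) → ℝ} (hf : HasCompactSupport f) :
    HasCompactSupport (gradient f) := by
  rw [gradient_eq_dualIso]
  exact (hf.fderiv ℝ).comp_left (map_zero _)

lemma cont_fderiv_gradient {ψ : EuclideanSpace ℝ (Fin m) → ℝ} (hψ : ContDiff ℝ (⊤ : ℕ∞) ψ) :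
    Continuous (fun x => fderiv ℝ (gradient ψ) x) := by
  have h : ContDiff ℝ (⊤ : ℕ∞) (fderiv ℝ (gradient ψ)) := (contDiff_gradient hψ).fderiv_right (by simp)
  exact h.continuous

lemma euclid_inner_eq (u v : EuclideanSpace ℝ (Fin m)) : ⟪u, v⟫ = ∑ i, u i * v i := by
  simp [PiLp.inner_apply, RCLike.inner_apply]
  exact Finset.sum_congr rfl fun i _ => mul_comm _ _

lemma euclid_inner_single (u : EuclideanSpace ℝ (Fin m)) (i : Fin m) :
    ⟪u, EuclideanSpace.single i 1⟫ = u i := by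
  simp [EuclideanSpace.inner_single_right]

lemma gradient_apply (f : EuclideanSpace ℝ (Fin m) → ℝ) (x : EuclideanSpace ℝ (Fin m))
    (i : Fin m) : gradient f x i = fderiv ℝ f x (EuclideanSpace.single i 1) := by
  rw [← inner_gradient, euclid_inner_single]

lemma laplacian_eq_sum (ψ : EuclideanSpace ℝ (Fin m) → ℝ) (x : EuclideanSpace ℝ (Fin m)) :
    laplacian ψ x = ∑ i, hess ψ x (EuclideanSpace.single i 1) (EuclideanSpace.single i 1) := by
  rw [laplacian,
    LinearMap.trace_eq_matrix_trace ℝ ((EuclideanSpace.basisFun (Fin m) ℝ).toBasis)]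
  simp only [hess, euclid_inner_single]
  simp [Matrix.trace, LinearMap.toMatrix_apply, EuclideanSpace.basisFun_repr,
    OrthonormalBasis.coe_toBasis_repr_apply, OrthonormalBasis.coe_toBasis,
    EuclideanSpace.basisFun_apply]

lemma hess_eq {ψ : EuclideanSpace ℝ (Fin m) → ℝ} (hψ : ContDiff ℝ (⊤ : ℕ∞) ψ)
    (x u v : EuclideanSpace ℝ (Fin m)) :
    hess ψ x u v = fderiv ℝ (fderiv ℝ ψ) x u v := by
  have hD : DifferentiableAt ℝ (fderiv ℝ ψ) x :=
    ((hψ.fderiv_right (m := (⊤ : ℕ∞)) (by simp)).differentiable (by simp)) x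
  have h : fderiv ℝ (gradient ψ) x = (dualIso m).comp (fderiv ℝ (fderiv ℝ ψ) x) := by
    rw [gradient_eq_dualIso]
    exact ((dualIso m).hasFDerivAt.comp x hD.hasFDerivAt).fderiv
  rw [hess, h]
  exact toDual_symm_apply

lemma hess_symm {ψ : EuclideanSpace ℝ (Fin m) → ℝ} (hψ : ContDiff ℝ (⊤ : ℕ∞) ψ)
    (x u v : EuclideanSpace ℝ (Fin m)) :
    hess ψ x u v = hess ψ x v u := by
  rw [hess_eq hψ, hess_eq hψ]
  exact second_derivative_symmetric
    (fun y => ((hψ.differentiable (by simp)) y).hasFDerivAt)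
    (((hψ.fderiv_right (m := (⊤ : ℕ∞)) (by simp)).differentiable (by simp)) x).hasFDerivAt u v

lemma fderiv_fderiv_apply {ψ : EuclideanSpace ℝ (Fin m) → ℝ} (hψ : ContDiff ℝ (⊤ : ℕ∞) ψ)
    (x u v : EuclideanSpace ℝ (Fin m)) :
    fderiv ℝ (fun y => fderiv ℝ ψ y v) x u = hess ψ x u v := by
  have hD : DifferentiableAt ℝ (fderiv ℝ ψ) x :=
    ((hψ.fderiv_right (m := (⊤ : ℕ∞)) (by simp)).differentiable (by simp)) x
  have key : HasFDerivAt (fun y => (ContinuousLinearMap.apply ℝ ℝ v) (fderiv ℝ ψ y))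
      ((ContinuousLinearMap.apply ℝ ℝ v).comp (fderiv ℝ (fderiv ℝ ψ) x)) x :=
    ((ContinuousLinearMap.apply ℝ ℝ v).hasFDerivAt).comp x hD.hasFDerivAt
  rw [show (fun y => fderiv ℝ ψ y v) =
      (fun y => (ContinuousLinearMap.apply ℝ ℝ v) (fderiv ℝ ψ y)) from rfl, key.fderiv]
  simp [hess_eq hψ]

lemma gradient_inner_apply {φ χ : EuclideanSpace ℝ (Fin m) → ℝ}
    (hφ : ContDiff ℝ (⊤ : ℕ∞) φ) (hχ : ContDiff ℝ (⊤ : ℕ∞) χ) (x v : EuclideanSpace ℝ (Fin m)) :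
    ⟪gradient (fun y => ⟪gradient φ y, gradient χ y⟫) x, v⟫
      = hess φ x v (gradient χ x) + hess χ x v (gradient φ x) := by
  rw [inner_gradient,
    fderiv_inner_apply ℝ ((contDiff_gradient hφ).differentiable (by simp) x)
      ((contDiff_gradient hχ).differentiable (by simp) x) v]
  rw [hess, hess, real_inner_comm]
  ring

lemma rho_log_inner (ρ : EuclideanSpace ℝ (Fin m) → ℝ) (hρ_pos : ∀ x, 0 < ρ x)
    (hρ : ContDiff ℝ 1 ρ) (x w : EuclideanSpace ℝ (Fin m)) :
    ρ x * ⟪gradient (fun y => Real.log (ρ y)) x, w⟫ = ⟪gradient ρ x, w⟫ := by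
  have h1 : HasFDerivAt (fun y => Real.log (ρ y)) ((ρ x)⁻¹ • fderiv ℝ ρ x) x :=
    (Real.hasDerivAt_log (hρ_pos x).ne').comp_hasFDerivAt x
      ((hρ.differentiable one_ne_zero) x).hasFDerivAt
  rw [inner_gradient, inner_gradient, h1.fderiv]
  simp only [ContinuousLinearMap.coe_smul', Pi.smul_apply, smul_eq_mul]
  rw [← mul_assoc, mul_inv_cancel₀ (hρ_pos x).ne', one_mul]

lemma contDiff_log_rho (ρ : EuclideanSpace ℝ (Fin m) → ℝ) (hρ_pos : ∀ x, 0 < ρ x)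
    (hρ : ContDiff ℝ 1 ρ) : ContDiff ℝ 1 (fun y => Real.log (ρ y)) := by
  rw [contDiff_iff_contDiffAt]
  intro x
  exact (Real.contDiffAt_log.2 (hρ_pos x).ne').comp x hρ.contDiffAt

lemma cont_Lmu (ρ : EuclideanSpace ℝ (Fin m) → ℝ) (hρ_pos : ∀ x, 0 < ρ x)
    (hρ : ContDiff ℝ 1 ρ) {ψ : EuclideanSpace ℝ (Fin m) → ℝ} (hψ : ContDiff ℝ (⊤ : ℕ∞) ψ) :
    Continuous (Lmu ρ ψ) := by
  have h1 : Continuous (laplacian ψ) := by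
    have : laplacian ψ = fun x =>
        ∑ i, hess ψ x (EuclideanSpace.single i 1) (EuclideanSpace.single i 1) :=
      funext (laplacian_eq_sum ψ)
    rw [this]
    exact continuous_finset_sum _ fun i _ =>
      Continuous.inner ((cont_fderiv_gradient hψ).clm_apply continuous_const) continuous_const
  have h2 : Continuous (gradient (fun y => Real.log (ρ y))) := by
    rw [gradient_eq_dualIso]
    exact (dualIso m).continuous.comp
      ((contDiff_log_rho ρ hρ_pos hρ).continuous_fderiv one_ne_zero)
  exact h1.add (Continuous.inner h2 (contDiff_gradient hψ).continuous)

lemma integrable_rho_hess {ρ : EuclideanSpace ℝ (Fin m) → ℝ} (hρc : Continuous ρ)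
    {φ ψa ψb : EuclideanSpace ℝ (Fin m) → ℝ} (hφ : ContDiff ℝ (⊤ : ℕ∞) φ)
    (ha : ContDiff ℝ (⊤ : ℕ∞) ψa) (has : HasCompactSupport ψa) (hb : ContDiff ℝ (⊤ : ℕ∞) ψb) :
    Integrable (fun x => ρ x * hess φ x (gradient ψa x) (gradient ψb x)) volume := by
  apply Continuous.integrable_of_hasCompactSupport
  · exact hρc.mul (Continuous.inner
      ((cont_fderiv_gradient hφ).clm_apply (contDiff_gradient ha).continuous)
      (contDiff_gradient hb).continuous)
  · apply (hcs_gradient has).mono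
    intro x hx
    simp only [Function.mem_support, Ne] at hx ⊢
    intro h0
    apply hx
    rw [h0]
    simp [hess]

lemma ibp_dir (ρ : EuclideanSpace ℝ (Fin m) → ℝ) (hρ : ContDiff ℝ 1 ρ)
    (f ψ : EuclideanSpace ℝ (Fin m) → ℝ)
    (hf : ContDiff ℝ (⊤ : ℕ∞) f) (hfs : HasCompactSupport f) (hψ : ContDiff ℝ (⊤ : ℕ∞) ψ)
    (v : EuclideanSpace ℝ (Fin m)) :
    ∫ x, f x * (fderiv ℝ ρ x v * fderiv ℝ ψ x v + ρ x * hess ψ x v v) =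
      - ∫ x, fderiv ℝ f x v * (ρ x * fderiv ℝ ψ x v) := by
  set g := fun x => ρ x * fderiv ℝ ψ x v with hg
  have hdv : ContDiff ℝ 1 (fun x => fderiv ℝ ψ x v) :=
    ((hψ.fderiv_right (m := (⊤ : ℕ∞)) (by simp)).of_le (by simp)).clm_apply contDiff_const
  have hg1 : ContDiff ℝ 1 g := hρ.mul hdv
  have hDg : ∀ x, fderiv ℝ g x v = fderiv ℝ ρ x v * fderiv ℝ ψ x v
      + ρ x * hess ψ x v v := by
    intro x
    rw [hg, fderiv_fun_mul ((hρ.differentiable one_ne_zero) x) ((hdv.differentiable one_ne_zero) x)]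
    simp only [ContinuousLinearMap.add_apply, ContinuousLinearMap.coe_smul', Pi.smul_apply,
      smul_eq_mul]
    rw [fderiv_fderiv_apply hψ]
    ring
  have key := integral_mul_fderiv_eq_neg_fderiv_mul_of_integrable (μ := volume)
    (f := f) (g := g) (v := v) ?_ ?_ ?_ (fun x _ => hf.differentiable (by simp) x) (fun x _ => hg1.differentiable one_ne_zero x)
  · rw [← key]
    exact integral_congr_ae (Filter.Eventually.of_forall (fun x => by dsimp only; rw [hDg x]))
  · apply Continuous.integrable_of_hasCompactSupport
    · exact ((((hf.fderiv_right (by simp)).continuous (n := (⊤ : ℕ∞)))).clm_apply continuous_const).mul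
        hg1.continuous
    · exact (((hfs.fderiv ℝ).comp_left (g := fun L : _ →L[ℝ] ℝ => L v) rfl).mul_right)
  · apply Continuous.integrable_of_hasCompactSupport
    · exact hf.continuous.mul ((hg1.continuous_fderiv one_ne_zero).clm_apply continuous_const)
    · exact hfs.mul_right
  · apply Continuous.integrable_of_hasCompactSupport
    · exact hf.continuous.mul hg1.continuous
    · exact hfs.mul_right

lemma ibp (ρ : EuclideanSpace ℝ (Fin m) → ℝ) (hρ_pos : ∀ x, 0 < ρ x)
    (hρ : ContDiff ℝ 1 ρ) (f ψ : EuclideanSpace ℝ (Fin m) → ℝ)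
    (hf : ContDiff ℝ (⊤ : ℕ∞) f) (hfs : HasCompactSupport f) (hψ : ContDiff ℝ (⊤ : ℕ∞) ψ) :
    ∫ x, ρ x * (Lmu ρ ψ x * f x) = - ∫ x, ρ x * ⟪gradient f x, gradient ψ x⟫ := by
  set e : Fin m → EuclideanSpace ℝ (Fin m) := fun i => EuclideanSpace.single i (1:ℝ) with he
  have hpt : ∀ x, ρ x * (Lmu ρ ψ x * f x)
      = ∑ i, f x * (fderiv ℝ ρ x (e i) * fderiv ℝ ψ x (e i) + ρ x * hess ψ x (e i) (e i)) := by
    intro x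
    have hinner : ⟪gradient ρ x, gradient ψ x⟫
        = ∑ i, fderiv ℝ ρ x (e i) * fderiv ℝ ψ x (e i) := by
      rw [euclid_inner_eq]
      exact Finset.sum_congr rfl fun i _ => by rw [gradient_apply, gradient_apply]
    calc ρ x * (Lmu ρ ψ x * f x)
        = f x * (ρ x * ∑ i, hess ψ x (e i) (e i))
          + f x * (ρ x * ⟪gradient (fun y => Real.log (ρ y)) x, gradient ψ x⟫) := by
          rw [Lmu, laplacian_eq_sum]; ring
      _ = f x * (∑ i, ρ x * hess ψ x (e i) (e i))
          + f x * (∑ i, fderiv ℝ ρ x (e i) * fderiv ℝ ψ x (e i)) := by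
          rw [rho_log_inner ρ hρ_pos hρ, hinner, Finset.mul_sum]
      _ = ∑ i, f x * (fderiv ℝ ρ x (e i) * fderiv ℝ ψ x (e i) + ρ x * hess ψ x (e i) (e i)) := by
          rw [Finset.mul_sum, Finset.mul_sum, ← Finset.sum_add_distrib]
          exact Finset.sum_congr rfl fun i _ => by ring
  have cont_hess_dir : ∀ i : Fin m, Continuous (fun x => hess ψ x (e i) (e i)) := fun i =>
    Continuous.inner ((cont_fderiv_gradient hψ).clm_apply continuous_const) continuous_const
  have int_term : ∀ i : Fin m, Integrable (fun x =>
      f x * (fderiv ℝ ρ x (e i) * fderiv ℝ ψ x (e i) + ρ x * hess ψ x (e i) (e i))) volume := by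
    intro i
    apply Continuous.integrable_of_hasCompactSupport
    · exact hf.continuous.mul ((((hρ.continuous_fderiv one_ne_zero).clm_apply continuous_const).mul
        (((hψ.fderiv_right (by simp)).continuous (n := (⊤ : ℕ∞))).clm_apply continuous_const)).add
        ((hρ.continuous).mul (cont_hess_dir i)))
    · exact hfs.mul_right
  have int_term2 : ∀ i : Fin m, Integrable (fun x =>
      fderiv ℝ f x (e i) * (ρ x * fderiv ℝ ψ x (e i))) volume := by
    intro i
    apply Continuous.integrable_of_hasCompactSupport
    · exact (((hf.fderiv_right (by simp)).continuous (n := (⊤ : ℕ∞))).clm_apply continuous_const).mul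
        (hρ.continuous.mul (((hψ.fderiv_right (by simp)).continuous (n := (⊤ : ℕ∞))).clm_apply
          continuous_const))
    · exact ((hfs.fderiv ℝ).comp_left (g := fun L : _ →L[ℝ] ℝ => L (e i)) rfl).mul_right
  calc ∫ x, ρ x * (Lmu ρ ψ x * f x)
      = ∫ x, ∑ i, f x * (fderiv ℝ ρ x (e i) * fderiv ℝ ψ x (e i)
          + ρ x * hess ψ x (e i) (e i)) :=
        integral_congr_ae (Filter.Eventually.of_forall hpt)
    _ = ∑ i, ∫ x, f x * (fderiv ℝ ρ x (e i) * fderiv ℝ ψ x (e i)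
          + ρ x * hess ψ x (e i) (e i)) := integral_finset_sum _ fun i _ => int_term i
    _ = ∑ i, - ∫ x, fderiv ℝ f x (e i) * (ρ x * fderiv ℝ ψ x (e i)) :=
        Finset.sum_congr rfl fun i _ => ibp_dir ρ hρ f ψ hf hfs hψ (e i)
    _ = - ∑ i, ∫ x, fderiv ℝ f x (e i) * (ρ x * fderiv ℝ ψ x (e i)) := by
        rw [Finset.sum_neg_distrib]
    _ = - ∫ x, ∑ i, fderiv ℝ f x (e i) * (ρ x * fderiv ℝ ψ x (e i)) := by
        rw [integral_finset_sum _ fun i _ => int_term2 i]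
    _ = - ∫ x, ρ x * ⟪gradient f x, gradient ψ x⟫ := by
        congr 1
        apply integral_congr_ae
        apply Filter.Eventually.of_forall
        intro x
        dsimp only
        rw [euclid_inner_eq, Finset.mul_sum]
        exact Finset.sum_congr rfl fun i _ => by
          rw [gradient_apply, gradient_apply]; ring

lemma integral_withDensity_rho (ρ : EuclideanSpace ℝ (Fin m) → ℝ) (hρ_pos : ∀ x, 0 < ρ x)
    (hρc : Continuous ρ) (g : EuclideanSpace ℝ (Fin m) → ℝ) :
    ∫ x, g x ∂(volume.withDensity (fun x => ENNReal.ofReal (ρ x)))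
      = ∫ x, ρ x * g x := by
  have h : (fun x => ENNReal.ofReal (ρ x))
      = fun x => ((Real.toNNReal (ρ x) : ENNReal)) := rfl
  rw [h, integral_withDensity_eq_integral_smul
    (by fun_prop : Measurable fun x => Real.toNNReal (ρ x)) g]
  apply integral_congr_ae
  apply Filter.Eventually.of_forall
  intro x
  simp [NNReal.smul_def, Real.coe_toNNReal _ (hρ_pos x).le]

end Helpers

/-- The covariant-derivative identity of Theorem 3.1: for `μ = ρ·λ` with positive `C¹`
density and smooth compactly supported `ψ₁, ψ₂, ψ₃`,
`∫⟨∇⟨∇ψ₁,∇ψ₂⟩, ∇ψ₃⟩ dμ + ∫⟨(L^μψ₂)∇ψ₁ − (L^μψ₁)∇ψ₂, ∇ψ₃⟩ dμ = 2∫ ∇²ψ₂(∇ψ₁,∇ψ₃) dμ`. -/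
theorem stmt11 {m : ℕ} (ρ : EuclideanSpace ℝ (Fin m) → ℝ)
    (hρ_pos : ∀ x, 0 < ρ x) (hρ : ContDiff ℝ 1 ρ)
    (ψ₁ ψ₂ ψ₃ : EuclideanSpace ℝ (Fin m) → ℝ)
    (h₁ : ContDiff ℝ (⊤ : ℕ∞) ψ₁) (h₁s : HasCompactSupport ψ₁)
    (h₂ : ContDiff ℝ (⊤ : ℕ∞) ψ₂) (h₂s : HasCompactSupport ψ₂)
    (h₃ : ContDiff ℝ (⊤ : ℕ∞) ψ₃) (h₃s : HasCompactSupport ψ₃) :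
    ∫ x, ⟪gradient (fun y => ⟪gradient ψ₁ y, gradient ψ₂ y⟫) x, gradient ψ₃ x⟫
        ∂(volume.withDensity (fun x => ENNReal.ofReal (ρ x)))
      + ∫ x, ⟪Lmu ρ ψ₂ x • gradient ψ₁ x - Lmu ρ ψ₁ x • gradient ψ₂ x, gradient ψ₃ x⟫
        ∂(volume.withDensity (fun x => ENNReal.ofReal (ρ x)))
      = 2 * ∫ x, hess ψ₂ x (gradient ψ₁ x) (gradient ψ₃ x)
          ∂(volume.withDensity (fun x => ENNReal.ofReal (ρ x))) := by
  have hρc : Continuous ρ := hρ.continuous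
  rw [integral_withDensity_rho ρ hρ_pos hρc, integral_withDensity_rho ρ hρ_pos hρc,
    integral_withDensity_rho ρ hρ_pos hρc]
  set A := ∫ x, ρ x * hess ψ₁ x (gradient ψ₂ x) (gradient ψ₃ x) with hA
  set B := ∫ x, ρ x * hess ψ₂ x (gradient ψ₁ x) (gradient ψ₃ x) with hB
  set C := ∫ x, ρ x * hess ψ₃ x (gradient ψ₁ x) (gradient ψ₂ x) with hC
  have intA : Integrable (fun x => ρ x * hess ψ₁ x (gradient ψ₂ x) (gradient ψ₃ x)) volume :=
    integrable_rho_hess hρc h₁ h₂ h₂s h₃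
  have intB : Integrable (fun x => ρ x * hess ψ₂ x (gradient ψ₁ x) (gradient ψ₃ x)) volume :=
    integrable_rho_hess hρc h₂ h₁ h₁s h₃
  have intC : Integrable (fun x => ρ x * hess ψ₃ x (gradient ψ₁ x) (gradient ψ₂ x)) volume :=
    integrable_rho_hess hρc h₃ h₁ h₁s h₂
  -- first integral
  have e1 : ∫ x, ρ x * ⟪gradient (fun y => ⟪gradient ψ₁ y, gradient ψ₂ y⟫) x, gradient ψ₃ x⟫
      = A + B := by
    calc ∫ x, ρ x * ⟪gradient (fun y => ⟪gradient ψ₁ y, gradient ψ₂ y⟫) x, gradient ψ₃ x⟫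
        = ∫ x, (ρ x * hess ψ₁ x (gradient ψ₂ x) (gradient ψ₃ x)
            + ρ x * hess ψ₂ x (gradient ψ₁ x) (gradient ψ₃ x)) := by
          apply integral_congr_ae
          apply Filter.Eventually.of_forall
          intro x
          dsimp only
          rw [gradient_inner_apply h₁ h₂ x (gradient ψ₃ x),
            hess_symm h₁ x (gradient ψ₃ x), hess_symm h₂ x (gradient ψ₃ x)]
          ring
      _ = A + B := integral_add intA intB
  -- smoothness and support of the two auxiliary inner products
  have hf13 : ContDiff ℝ (⊤ : ℕ∞) (fun x => ⟪gradient ψ₁ x, gradient ψ₃ x⟫) :=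
    ContDiff.inner ℝ (contDiff_gradient h₁) (contDiff_gradient h₃)
  have hfs13 : HasCompactSupport (fun x => ⟪gradient ψ₁ x, gradient ψ₃ x⟫) :=
    (hcs_gradient h₁s).comp₂_left (hcs_gradient h₃s) (by simp)
  have hf23 : ContDiff ℝ (⊤ : ℕ∞) (fun x => ⟪gradient ψ₂ x, gradient ψ₃ x⟫) :=
    ContDiff.inner ℝ (contDiff_gradient h₂) (contDiff_gradient h₃)
  have hfs23 : HasCompactSupport (fun x => ⟪gradient ψ₂ x, gradient ψ₃ x⟫) :=
    (hcs_gradient h₂s).comp₂_left (hcs_gradient h₃s) (by simp)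
  -- the two integrations by parts
  have ibp2 := ibp ρ hρ_pos hρ (fun x => ⟪gradient ψ₁ x, gradient ψ₃ x⟫) ψ₂ hf13 hfs13 h₂
  have ibp1 := ibp ρ hρ_pos hρ (fun x => ⟪gradient ψ₂ x, gradient ψ₃ x⟫) ψ₁ hf23 hfs23 h₁
  have e2a : ∫ x, ρ x * ⟪gradient (fun x => ⟪gradient ψ₁ x, gradient ψ₃ x⟫) x, gradient ψ₂ x⟫
      = A + C := by
    calc ∫ x, ρ x * ⟪gradient (fun x => ⟪gradient ψ₁ x, gradient ψ₃ x⟫) x, gradient ψ₂ x⟫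
        = ∫ x, (ρ x * hess ψ₁ x (gradient ψ₂ x) (gradient ψ₃ x)
            + ρ x * hess ψ₃ x (gradient ψ₁ x) (gradient ψ₂ x)) := by
          apply integral_congr_ae
          apply Filter.Eventually.of_forall
          intro x
          dsimp only
          rw [gradient_inner_apply h₁ h₃ x (gradient ψ₂ x),
            hess_symm h₃ x (gradient ψ₂ x)]
          ring
      _ = A + C := integral_add intA intC
  have e2b : ∫ x, ρ x * ⟪gradient (fun x => ⟪gradient ψ₂ x, gradient ψ₃ x⟫) x, gradient ψ₁ x⟫
      = B + C := by
    calc ∫ x, ρ x * ⟪gradient (fun x => ⟪gradient ψ₂ x, gradient ψ₃ x⟫) x, gradient ψ₁ x⟫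
        = ∫ x, (ρ x * hess ψ₂ x (gradient ψ₁ x) (gradient ψ₃ x)
            + ρ x * hess ψ₃ x (gradient ψ₁ x) (gradient ψ₂ x)) := by
          apply integral_congr_ae
          apply Filter.Eventually.of_forall
          intro x
          dsimp only
          rw [gradient_inner_apply h₂ h₃ x (gradient ψ₁ x),
            hess_symm h₂ x (gradient ψ₁ x), hess_symm h₃ x (gradient ψ₁ x)]
          ring
      _ = B + C := integral_add intB intC
  -- integrability for splitting the second integral
  have int2a : Integrable
      (fun x => ρ x * (Lmu ρ ψ₂ x * ⟪gradient ψ₁ x, gradient ψ₃ x⟫)) volume := by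
    apply Continuous.integrable_of_hasCompactSupport
    · exact hρc.mul ((cont_Lmu ρ hρ_pos hρ h₂).mul
        (Continuous.inner (contDiff_gradient h₁).continuous (contDiff_gradient h₃).continuous))
    · apply (hcs_gradient h₁s).mono
      intro x hx
      simp only [Function.mem_support, Ne] at hx ⊢
      intro h0
      apply hx
      rw [h0]
      simp
  have int2b : Integrable
      (fun x => ρ x * (Lmu ρ ψ₁ x * ⟪gradient ψ₂ x, gradient ψ₃ x⟫)) volume := by
    apply Continuous.integrable_of_hasCompactSupport
    · exact hρc.mul ((cont_Lmu ρ hρ_pos hρ h₁).mul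
        (Continuous.inner (contDiff_gradient h₂).continuous (contDiff_gradient h₃).continuous))
    · apply (hcs_gradient h₂s).mono
      intro x hx
      simp only [Function.mem_support, Ne] at hx ⊢
      intro h0
      apply hx
      rw [h0]
      simp
  have e2 : ∫ x, ρ x * ⟪Lmu ρ ψ₂ x • gradient ψ₁ x - Lmu ρ ψ₁ x • gradient ψ₂ x, gradient ψ₃ x⟫
      = (B + C) - (A + C) := by
    calc ∫ x, ρ x * ⟪Lmu ρ ψ₂ x • gradient ψ₁ x - Lmu ρ ψ₁ x • gradient ψ₂ x, gradient ψ₃ x⟫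
        = ∫ x, (ρ x * (Lmu ρ ψ₂ x * ⟪gradient ψ₁ x, gradient ψ₃ x⟫)
            - ρ x * (Lmu ρ ψ₁ x * ⟪gradient ψ₂ x, gradient ψ₃ x⟫)) := by
          apply integral_congr_ae
          apply Filter.Eventually.of_forall
          intro x
          dsimp only
          rw [inner_sub_left, real_inner_smul_left, real_inner_smul_left]
          ring
      _ = (∫ x, ρ x * (Lmu ρ ψ₂ x * ⟪gradient ψ₁ x, gradient ψ₃ x⟫))
            - ∫ x, ρ x * (Lmu ρ ψ₁ x * ⟪gradient ψ₂ x, gradient ψ₃ x⟫) :=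
          integral_sub int2a int2b
      _ = (B + C) - (A + C) := by rw [ibp1, ibp2, e2a, e2b]; ring
  rw [e1, e2]
  ring
end
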